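/- Let K be a convex pentagon formed as the union of a rectangle BCDE with side lengths a and b and an equilateral triangle ABE with side length a and height h, glued along the common side BE. Then for every interior point P of the pentagon, the sum of the distances from P to the lines containing the five sides equals a + b + h. -/

import Mathlib

/-!
Since the vertices run counterclockwise, the whole pentagon lies to the left of each side line,
so on it the distance to the line through `p, q` is the affine function
`(q - p) × (P - p) / ‖q - p‖`, with no absolute value. As `(a/2)² + h² = a²`, the gradients
of these five functions are the inward unit normals
`(h, -a/2)/a, (1, 0), (0, 1), (-1, 0), (-h, -a/2)/a`, which sum to zero; so the sum of the
distances is a constant, `a + b + h`.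
-/

open Metric

noncomputable section

abbrev E2 := EuclideanSpace ℝ (Fin 2)

def pt (x y : ℝ) : E2 := WithLp.toLp 2 ![x, y]

theorem infDist_affineSpan_pair_eq_of_sub_eq {V : Type*} [NormedAddCommGroup V]
    [InnerProductSpace ℝ V] {p q P n : V} {s t : ℝ} (horth : inner ℝ n (q - p) = 0)
    (hP : P - p = s • n + t • (q - p)) :
    infDist P (affineSpan ℝ {p, q}) = ‖s • n‖ := by
  have hfoot : t • (q - p) + p ∈ affineSpan ℝ {p, q} :=
    smul_vsub_vadd_mem_affineSpan_pair t p q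
  apply le_antisymm
  · calc infDist P (affineSpan ℝ {p, q}) ≤ dist P (t • (q - p) + p) :=
          infDist_le_dist_of_mem hfoot
      _ = ‖s • n‖ := by rw [dist_eq_norm, ← sub_sub, sub_right_comm, hP, add_sub_cancel_right]
  · refine (le_infDist ⟨_, hfoot⟩).2 fun z hz ↦ ?_
    obtain ⟨r, hr⟩ := vadd_left_mem_affineSpan_pair.1 (show (z - p) +ᵥ p ∈ _ by simpa using hz)
    have hPz : P - z = s • n + (t - r) • (q - p) := by
      rw [show P - z = (P - p) - (z - p) by abel, hP, ← hr, vsub_eq_sub]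
      module
    have hpyth := norm_add_sq_eq_norm_sq_add_norm_sq_real
      (x := s • n) (y := (t - r) • (q - p))
      (by rw [real_inner_smul_left, real_inner_smul_right, horth]; ring)
    rw [dist_eq_norm, hPz]
    exact le_of_pow_le_pow_left₀ two_ne_zero (norm_nonneg _)
      (by rw [sq, sq, hpyth]; exact le_add_of_nonneg_right (mul_self_nonneg _))

lemma norm_pt (x y : ℝ) : ‖pt x y‖ = √(x ^ 2 + y ^ 2) := by
  simp [pt, EuclideanSpace.norm_eq, Fin.sum_univ_two]

theorem infDist_affineSpan_pt_pair {x₁ y₁ x₂ y₂ ℓ : ℝ} (hℓ : 0 < ℓ)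
    (hlen : (x₂ - x₁) ^ 2 + (y₂ - y₁) ^ 2 = ℓ ^ 2) (P : E2) :
    infDist P (affineSpan ℝ {pt x₁ y₁, pt x₂ y₂}) =
      |(x₂ - x₁) * (P 1 - y₁) - (y₂ - y₁) * (P 0 - x₁)| / ℓ := by
  set cross := (x₂ - x₁) * (P 1 - y₁) - (y₂ - y₁) * (P 0 - x₁)
  set dot := (x₂ - x₁) * (P 0 - x₁) + (y₂ - y₁) * (P 1 - y₁)
  have hnormal : ‖pt (-(y₂ - y₁)) (x₂ - x₁)‖ = ℓ := by
    rw [norm_pt, neg_sq, add_comm, hlen, Real.sqrt_sq hℓ.le]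
  rw [infDist_affineSpan_pair_eq_of_sub_eq (n := pt (-(y₂ - y₁)) (x₂ - x₁))
      (s := cross / ℓ ^ 2) (t := dot / ℓ ^ 2), norm_smul, hnormal, Real.norm_eq_abs, abs_div,
      abs_of_pos (pow_pos hℓ 2)]
  · field_simp
  · simp only [pt, PiLp.inner_apply, PiLp.sub_apply, RCLike.inner_apply, Real.ringHom_apply,
      Fin.sum_univ_two, Fin.isValue, Matrix.cons_val_zero, Matrix.cons_val_one,
      Matrix.cons_val_fin_one]
    ring
  · ext i
    fin_cases i <;>
      simp only [pt, cross, dot, Fin.zero_eta, Fin.mk_one, Fin.isValue, PiLp.sub_apply,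
        PiLp.add_apply, PiLp.smul_apply, smul_eq_mul, Matrix.cons_val_zero, Matrix.cons_val_one,
        Matrix.cons_val_fin_one, neg_sub] <;>
      field_simp
    · linear_combination (x₁ - P 0) * hlen
    · linear_combination (y₁ - P 1) * hlen

theorem cross_nonneg_of_mem_convexHull {s : Set E2} {x₁ y₁ x₂ y₂ : ℝ}
    (hs : ∀ v ∈ s, 0 ≤ (x₂ - x₁) * (v 1 - y₁) - (y₂ - y₁) * (v 0 - x₁)) {P : E2}
    (hP : P ∈ convexHull ℝ s) : 0 ≤ (x₂ - x₁) * (P 1 - y₁) - (y₂ - y₁) * (P 0 - x₁) := by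
  have hlin : IsLinearMap ℝ fun v : E2 ↦ (x₂ - x₁) * v 1 - (y₂ - y₁) * v 0 :=
    ⟨fun u v ↦ by simp only [PiLp.add_apply]; ring,
     fun r v ↦ by simp only [PiLp.smul_apply, smul_eq_mul]; ring⟩
  have hhalf := convexHull_min (fun v hv ↦ by rw [Set.mem_ofPred_eq]; linarith [hs v hv])
    (convex_halfSpace_ge hlin ((x₂ - x₁) * y₁ - (y₂ - y₁) * x₁)) hP
  rw [Set.mem_ofPred_eq] at hhalf
  linarith

theorem infDist_affineSpan_pt_pair_of_mem_convexHull {s : Set E2} {x₁ y₁ x₂ y₂ ℓ : ℝ}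
    (hℓ : 0 < ℓ) (hlen : (x₂ - x₁) ^ 2 + (y₂ - y₁) ^ 2 = ℓ ^ 2)
    (hs : ∀ v ∈ s, 0 ≤ (x₂ - x₁) * (v 1 - y₁) - (y₂ - y₁) * (v 0 - x₁)) {P : E2}
    (hP : P ∈ convexHull ℝ s) :
    infDist P (affineSpan ℝ {pt x₁ y₁, pt x₂ y₂}) =
      ((x₂ - x₁) * (P 1 - y₁) - (y₂ - y₁) * (P 0 - x₁)) / ℓ := by
  rw [infDist_affineSpan_pt_pair hℓ hlen, abs_of_nonneg (cross_nonneg_of_mem_convexHull hs hP)]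

/-- Viviani-type theorem for the pentagon which is the union of the rectangle `BCDE`
with side lengths `a`, `b` and the equilateral triangle `ABE` with side length `a` and
height `h = (√3/2)a`, glued along `BE`: with `B=(-a/2, b)`, `C=(-a/2, 0)`,
`D=(a/2, 0)`, `E=(a/2, b)`, `A=(0, b+h)`, the sum of the distances from any interior
point `P` to the lines containing the five sides equals `a + b + h`. -/
theorem pentagon_viviani (a b : ℝ) (ha : 0 < a) (hb : 0 < b)
    (P : E2)
    (hP : P ∈ interior (convexHull ℝ
      ({pt 0 (b + Real.sqrt 3 / 2 * a), pt (-(a / 2)) b, pt (-(a / 2)) 0,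
        pt (a / 2) 0, pt (a / 2) b} : Set E2))) :
    infDist P (affineSpan ℝ {pt 0 (b + Real.sqrt 3 / 2 * a), pt (-(a / 2)) b} : Set E2)
      + infDist P (affineSpan ℝ {pt (-(a / 2)) b, pt (-(a / 2)) 0} : Set E2)
      + infDist P (affineSpan ℝ {pt (-(a / 2)) 0, pt (a / 2) 0} : Set E2)
      + infDist P (affineSpan ℝ {pt (a / 2) 0, pt (a / 2) b} : Set E2)
      + infDist P (affineSpan ℝ {pt (a / 2) b, pt 0 (b + Real.sqrt 3 / 2 * a)} : Set E2)
      = a + b + Real.sqrt 3 / 2 * a := by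
  set h := Real.sqrt 3 / 2 * a
  have hh : 0 < h := by positivity
  have hslant : (a / 2) ^ 2 + h ^ 2 = a ^ 2 := by
    linear_combination (a ^ 2 / 4) * Real.sq_sqrt (show (0 : ℝ) ≤ 3 by norm_num)
  have hull := interior_subset hP
  rw [infDist_affineSpan_pt_pair_of_mem_convexHull ha (by linear_combination hslant) ?_ hull,
    infDist_affineSpan_pt_pair_of_mem_convexHull hb (by ring) ?_ hull,
    infDist_affineSpan_pt_pair_of_mem_convexHull ha (by ring) ?_ hull,
    infDist_affineSpan_pt_pair_of_mem_convexHull hb (by ring) ?_ hull,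
    infDist_affineSpan_pt_pair_of_mem_convexHull ha (by linear_combination hslant) ?_ hull]
  · field_simp
    ring
  all_goals
    rintro v (rfl | rfl | rfl | rfl | rfl) <;>
      simp only [pt, Fin.isValue, Matrix.cons_val_zero, Matrix.cons_val_one,
        Matrix.cons_val_fin_one] <;>
      nlinarith [mul_pos ha hb, mul_pos ha hh]
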